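/- Let a : [0,1] → ℝ be weakly or strongly degenerate at 0. If y ∈ H²_{1/a}(0,1) is four times (weakly) differentiable on (0,1] and ∫₀¹ a(x) y''''(x)² dx < ∞ (i.e. y ∈ D(A)), then y'' ∈ W^{1,1}(0,1); in particular y''' ∈ L¹(0,1), y''(x) = y''(1) − ∫ₓ¹ y'''(s) ds for all x ∈ (0,1], and the limit lim_{x→0⁺} y''(x) exists and is finite. -/

import Mathlib

open MeasureTheory Set Filter Topology

noncomputable section

/-- The set of quotients `x |a'(x)| / a(x)` for `x ∈ (0,1]`, whose supremum is the
degeneracy constant `K`. -/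
def DegenSet (a a' : ℝ → ℝ) : Set ℝ :=
  {r : ℝ | ∃ x ∈ Set.Ioc (0:ℝ) 1, r = x * |a' x| / a x}

/-- `a` is weakly degenerate at `0` with constant `K`: `a ∈ C[0,1] ∩ C¹(0,1]`, `a(0) = 0`,
`a > 0` on `(0,1]`, and `K = sup_{x ∈ (0,1]} x|a'(x)|/a(x) ∈ (0,1)`. -/
def WeaklyDegenerate (a a' : ℝ → ℝ) (K : ℝ) : Prop :=
  ContinuousOn a (Set.Icc 0 1) ∧
  (∀ x ∈ Set.Ioc (0:ℝ) 1, HasDerivWithinAt a (a' x) (Set.Icc 0 1) x) ∧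
  ContinuousOn a' (Set.Ioc 0 1) ∧
  a 0 = 0 ∧ (∀ x ∈ Set.Ioc (0:ℝ) 1, 0 < a x) ∧
  K = sSup (DegenSet a a') ∧ 0 < K ∧ K < 1

/-- `a` is strongly degenerate at `0` with constant `K`: `a ∈ C¹[0,1]`, `a(0) = 0`,
`a > 0` on `(0,1]`, and `K = sup_{x ∈ (0,1]} x|a'(x)|/a(x) ∈ [1,2)`. -/
def StronglyDegenerate (a a' : ℝ → ℝ) (K : ℝ) : Prop :=
  (∀ x ∈ Set.Icc (0:ℝ) 1, HasDerivWithinAt a (a' x) (Set.Icc 0 1) x) ∧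
  ContinuousOn a' (Set.Icc 0 1) ∧
  a 0 = 0 ∧ (∀ x ∈ Set.Ioc (0:ℝ) 1, 0 < a x) ∧
  K = sSup (DegenSet a a') ∧ 1 ≤ K ∧ K < 2

/-- `a` is weakly or strongly degenerate at `0` with constant `K`. -/
def Degenerate (a a' : ℝ → ℝ) (K : ℝ) : Prop :=
  WeaklyDegenerate a a' K ∨ StronglyDegenerate a a' K

lemma degen_props (a a' : ℝ → ℝ) (K : ℝ) (h : Degenerate a a' K) :
    (∀ x ∈ Set.Ioc (0:ℝ) 1, HasDerivWithinAt a (a' x) (Set.Icc 0 1) x) ∧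
    (∀ x ∈ Set.Ioc (0:ℝ) 1, 0 < a x) ∧
    (∀ x ∈ Set.Ioc (0:ℝ) 1, x * |a' x| ≤ K * a x) ∧ 0 < K ∧ K < 2 := by
  have hKpos : 0 < K := by
    rcases h with hw | hs
    · exact hw.2.2.2.2.2.2.1
    · linarith [hs.2.2.2.2.2.1]
  have hK2 : K < 2 := by
    rcases h with hw | hs
    · linarith [hw.2.2.2.2.2.2.2]
    · exact hs.2.2.2.2.2.2
  have hd : ∀ x ∈ Set.Ioc (0:ℝ) 1, HasDerivWithinAt a (a' x) (Set.Icc 0 1) x := by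
    rcases h with hw | hs
    · exact hw.2.1
    · exact fun x hx => hs.1 x ⟨hx.1.le, hx.2⟩
  have hpos : ∀ x ∈ Set.Ioc (0:ℝ) 1, 0 < a x := by
    rcases h with hw | hs
    · exact hw.2.2.2.2.1
    · exact hs.2.2.2.1
  have hKsup : K = sSup (DegenSet a a') := by
    rcases h with hw | hs
    · exact hw.2.2.2.2.2.1
    · exact hs.2.2.2.2.1
  have hbdd : BddAbove (DegenSet a a') := by
    by_contra hb
    rw [Real.sSup_of_not_bddAbove hb] at hKsup
    linarith
  refine ⟨hd, hpos, fun x hx => ?_, hKpos, hK2⟩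
  have hmem : x * |a' x| / a x ∈ DegenSet a a' := ⟨x, hx, rfl⟩
  have := le_csSup hbdd hmem
  rw [← hKsup] at this
  have hax := hpos x hx
  calc x * |a' x| = (x * |a' x| / a x) * a x := by field_simp
  _ ≤ K * a x := mul_le_mul_of_nonneg_right this hax.le

lemma a_lower (a a' : ℝ → ℝ) (K : ℝ) (hKpos : 0 < K)
    (hd : ∀ x ∈ Set.Ioc (0:ℝ) 1, HasDerivWithinAt a (a' x) (Set.Icc 0 1) x)
    (hpos : ∀ x ∈ Set.Ioc (0:ℝ) 1, 0 < a x)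
    (hb : ∀ x ∈ Set.Ioc (0:ℝ) 1, x * |a' x| ≤ K * a x) :
    ∀ x ∈ Set.Ioc (0:ℝ) 1, a 1 * x ^ K ≤ a x := by
  set f : ℝ → ℝ := fun x => Real.log (a x) - K * Real.log x with hf
  have hderiv : ∀ x ∈ Set.Ioo (0:ℝ) 1, HasDerivAt f (a' x / a x - K * x⁻¹) x := by
    intro x hx
    have hxI : x ∈ Set.Ioc (0:ℝ) 1 := ⟨hx.1, hx.2.le⟩
    have ha : HasDerivAt a (a' x) x :=
      (hd x hxI).hasDerivAt (Icc_mem_nhds hx.1 hx.2)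
    have h1 : HasDerivAt (fun x => Real.log (a x)) (a' x / a x) x :=
      ha.log (hpos x hxI).ne'
    have h2 : HasDerivAt (fun x => K * Real.log x) (K * x⁻¹) x :=
      (Real.hasDerivAt_log hx.1.ne').const_mul K
    exact h1.sub h2
  have hcontf : ContinuousOn f (Set.Ioc 0 1) := by
    have hca : ContinuousOn a (Set.Ioc 0 1) :=
      fun x hx => ((hd x hx).continuousWithinAt).mono Ioc_subset_Icc_self
    exact (hca.log (fun x hx => (hpos x hx).ne')).sub
      ((continuousOn_id.log (fun x hx => hx.1.ne')).const_smul K)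
  have hanti : AntitoneOn f (Set.Ioc 0 1) := by
    apply antitoneOn_of_deriv_nonpos (convex_Ioc 0 1) hcontf
    · rw [interior_Ioc]
      exact fun x hx => ((hderiv x hx).differentiableAt).differentiableWithinAt
    · rw [interior_Ioc]
      intro x hx
      rw [(hderiv x hx).deriv]
      have hxI : x ∈ Set.Ioc (0:ℝ) 1 := ⟨hx.1, hx.2.le⟩
      have h1 : a' x * x ≤ K * a x := by
        calc a' x * x ≤ |a' x| * x := by
              exact mul_le_mul_of_nonneg_right (le_abs_self _) hx.1.le
        _ = x * |a' x| := by ring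
        _ ≤ K * a x := hb x hxI
      have hax := hpos x hxI
      rw [sub_nonpos, div_le_iff₀ hax, mul_comm K x⁻¹, mul_assoc]
      calc a' x ≤ K * a x / x := by rw [le_div_iff₀ hx.1]; linarith
      _ = x⁻¹ * (K * a x) := by field_simp
  intro x hx
  have h1 : f 1 ≤ f x := hanti hx (by norm_num) hx.2
  have hax := hpos x hx
  have ha1 : 0 < a 1 := hpos 1 (by norm_num)
  have hrw : Real.log (a 1 * x ^ K) ≤ Real.log (a x) := by
    rw [Real.log_mul ha1.ne' (Real.rpow_pos_of_pos hx.1 K).ne', Real.log_rpow hx.1]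
    simp only [hf, Real.log_one] at h1
    linarith [h1]
  have := Real.exp_le_exp.mpr hrw
  rwa [Real.exp_log (mul_pos ha1 (Real.rpow_pos_of_pos hx.1 K)), Real.exp_log hax] at this

/-- `u ∈ H²_{1/a}(0,1)`: `u, u'` are absolutely continuous on `[0,1]` with `u'' ∈ L²(0,1)`,
`u(0) = u(1) = u'(0) = u'(1) = 0`, and `∫₀¹ u²/a < ∞`. -/
def MemH2w (a u u' u'' : ℝ → ℝ) : Prop :=
  IntervalIntegrable u'' MeasureTheory.volume 0 1 ∧
  MeasureTheory.IntegrableOn (fun x => u'' x ^ 2) (Set.Ioc 0 1) ∧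
  (∀ x ∈ Set.Icc (0:ℝ) 1, u' x = u' 0 + ∫ s in (0:ℝ)..x, u'' s) ∧
  (∀ x ∈ Set.Icc (0:ℝ) 1, u x = u 0 + ∫ s in (0:ℝ)..x, u' s) ∧
  u 0 = 0 ∧ u 1 = 0 ∧ u' 0 = 0 ∧ u' 1 = 0 ∧
  MeasureTheory.IntegrableOn (fun x => u x ^ 2 / a x) (Set.Ioc 0 1)

/-- If `a` is weakly or strongly degenerate at `0` and `y ∈ D(A)` (i.e.
`y ∈ H²_{1/a}(0,1)` is four times differentiable on `(0,1]` with `∫₀¹ a (y'''')² < ∞`),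
then `y'' ∈ W^{1,1}(0,1)`: `y''' ∈ L¹(0,1)`, `y''(x) = y''(1) - ∫ₓ¹ y'''(s) ds` for all
`x ∈ (0,1]`, and `lim_{x→0⁺} y''(x)` exists and is finite. -/
theorem second_deriv_W11 (a a' : ℝ → ℝ) (K : ℝ) (h : Degenerate a a' K)
    (y y' y'' y''' y'''' : ℝ → ℝ)
    (hy : MemH2w a y y' y'')
    (hy3 : ∀ x ∈ Set.Ioc (0:ℝ) 1, HasDerivWithinAt y'' (y''' x) (Set.Ioc 0 1) x)
    (hy4 : ∀ x ∈ Set.Ioc (0:ℝ) 1, HasDerivWithinAt y''' (y'''' x) (Set.Ioc 0 1) x)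
    (hDA : MeasureTheory.IntegrableOn (fun x => a x * y'''' x ^ 2) (Set.Ioc 0 1)) :
    MeasureTheory.IntegrableOn y''' (Set.Ioc 0 1) ∧
    (∀ x ∈ Set.Ioc (0:ℝ) 1, y'' x = y'' 1 - ∫ s in x..(1:ℝ), y''' s) ∧
    (∃ L : ℝ, Filter.Tendsto y'' (nhdsWithin 0 (Set.Ioi 0)) (nhds L)) := by
  clear hy
  obtain ⟨hd, hpos, hb, hKpos, hK2⟩ := degen_props a a' K h
  have ha1 : 0 < a 1 := hpos 1 (by norm_num)
  set K' : ℝ := max K (3/2) with hK'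
  have hK'1 : (1:ℝ) < K' := lt_of_lt_of_le (by norm_num) (le_max_right _ _)
  have hK'2 : K' < 2 := max_lt hK2 (by norm_num)
  have hKK' : K ≤ K' := le_max_left _ _
  have hlow := a_lower a a' K hKpos hd hpos hb
  have hinv : ∀ s ∈ Set.Ioc (0:ℝ) 1, 1 / a s ≤ s ^ (-K') / a 1 := by
    intro s hs
    have h1 : 0 < a 1 * s ^ K := mul_pos ha1 (Real.rpow_pos_of_pos hs.1 K)
    have h2 : 1 / a s ≤ 1 / (a 1 * s ^ K) :=
      one_div_le_one_div_of_le h1 (hlow s hs)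
    have h3 : (s:ℝ) ^ (-K) ≤ s ^ (-K') :=
      Real.rpow_le_rpow_of_exponent_ge hs.1 hs.2 (neg_le_neg hKK')
    calc 1 / a s ≤ 1 / (a 1 * s ^ K) := h2
      _ = s ^ (-K) / a 1 := by
          have hsK : (s:ℝ) ^ K ≠ 0 := (Real.rpow_pos_of_pos hs.1 K).ne'
          rw [Real.rpow_neg hs.1.le]
          field_simp
      _ ≤ s ^ (-K') / a 1 := (div_le_div_iff_of_pos_right ha1).mpr h3
  have habs : ∀ s ∈ Set.Ioc (0:ℝ) 1, |y'''' s| ≤ (a s * y'''' s ^ 2 + 1 / a s) / 2 := by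
    intro s hs
    have hax := hpos s hs
    have h1 : a s * (1 / a s) = 1 := by field_simp
    have h2 : 2 * (a s * |y'''' s|) ≤ (a s)^2 * y'''' s ^ 2 + 1 := by
      nlinarith [sq_nonneg (a s * |y'''' s| - 1), sq_abs (y'''' s)]
    have h4 : 0 ≤ a s * ((a s * y'''' s ^ 2 + 1 / a s) / 2 - |y'''' s|) := by
      have hrw : a s * ((a s * y'''' s ^ 2 + 1 / a s) / 2 - |y'''' s|)
          = ((a s)^2 * y'''' s ^ 2 + a s * (1 / a s)) / 2 - a s * |y'''' s| := by ring
      rw [hrw, h1]; linarith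
    have h5 := div_nonneg h4 hax.le
    have h6 : a s * ((a s * y'''' s ^ 2 + 1 / a s) / 2 - |y'''' s|) / a s
        = (a s * y'''' s ^ 2 + 1 / a s) / 2 - |y'''' s| := by
      rw [mul_comm, mul_div_assoc, div_self hax.ne', mul_one]
    rw [h6] at h5
    linarith
  -- measurability of y''''
  have hmeas4 : MeasureTheory.AEStronglyMeasurable y''''
      (MeasureTheory.volume.restrict (Set.Ioc 0 1)) := by
    have hw : Measurable (fun t => derivWithin y''' (Set.Ioi t) t) := measurable_derivWithin_Ioi y'''
    have heq : ∀ t ∈ Set.Ioo (0:ℝ) 1, y'''' t = derivWithin y''' (Set.Ioi t) t := by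
      intro t ht
      have hmem : Set.Ioc (0:ℝ) 1 ∈ 𝓝[Set.Ioi t] t := by
        apply Filter.mem_of_superset (inter_mem_nhdsWithin (Set.Ioi t) (Iio_mem_nhds ht.2))
        exact fun s hs => ⟨ht.1.trans hs.1, hs.2.le⟩
      have h1 : HasDerivWithinAt y''' (y'''' t) (Set.Ioi t) t :=
        (hy4 t ⟨ht.1, ht.2.le⟩).mono_of_mem_nhdsWithin hmem
      exact (h1.derivWithin (uniqueDiffWithinAt_Ioi t)).symm
    have hae : y'''' =ᵐ[MeasureTheory.volume.restrict (Set.Ioc 0 1)]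
        fun t => derivWithin y''' (Set.Ioi t) t := by
      have h1 : ∀ᵐ t ∂(MeasureTheory.volume.restrict (Set.Ioc 0 1)), t ∈ Set.Ioc (0:ℝ) 1 :=
        ae_restrict_mem measurableSet_Ioc
      have h2 : ∀ᵐ t ∂(MeasureTheory.volume.restrict (Set.Ioc (0:ℝ) 1)), t ≠ 1 := by
        refine MeasureTheory.ae_restrict_of_ae ?_
        have hset : {t : ℝ | ¬ t ≠ 1} = {1} := by ext t; simp
        rw [MeasureTheory.ae_iff, hset]
        exact MeasureTheory.measure_singleton (1:ℝ)
      filter_upwards [h1, h2] with t ht hne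
      exact heq t ⟨ht.1, lt_of_le_of_ne ht.2 hne⟩
    exact (hw.aestronglyMeasurable).congr hae.symm
  have hint4 : ∀ x ∈ Set.Ioc (0:ℝ) 1, MeasureTheory.IntegrableOn y'''' (Set.Ioc x 1) := by
    intro x hx
    have hsub : Set.Ioc x 1 ⊆ Set.Ioc (0:ℝ) 1 := Set.Ioc_subset_Ioc_left hx.1.le
    have hg : MeasureTheory.IntegrableOn
        (fun s => (a s * y'''' s ^ 2 + x ^ (-K') / a 1) / 2) (Set.Ioc x 1) :=
      ((hDA.mono_set hsub).add
        (MeasureTheory.integrableOn_const measure_Ioc_lt_top.ne)).div_const 2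
    refine MeasureTheory.Integrable.mono' hg
      (hmeas4.mono_measure (MeasureTheory.Measure.restrict_mono hsub le_rfl)) ?_
    rw [MeasureTheory.ae_restrict_iff' measurableSet_Ioc]
    refine MeasureTheory.ae_of_all _ fun s hs => ?_
    have hsI : s ∈ Set.Ioc (0:ℝ) 1 := hsub hs
    have h1 := habs s hsI
    have h2 : 1 / a s ≤ x ^ (-K') / a 1 := by
      refine (hinv s hsI).trans ((div_le_div_iff_of_pos_right ha1).mpr ?_)
      exact Real.rpow_le_rpow_of_nonpos hx.1 hs.1.le (by linarith)
    rw [Real.norm_eq_abs]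
    linarith
  have hcont3 : ContinuousOn y''' (Set.Ioc 0 1) := fun t ht => (hy4 t ht).continuousWithinAt
  have hcont2 : ContinuousOn y'' (Set.Ioc 0 1) := fun t ht => (hy3 t ht).continuousWithinAt
  have hnhds : ∀ t ∈ Set.Ioo (0:ℝ) 1, Set.Ioc (0:ℝ) 1 ∈ 𝓝 t := fun t ht =>
    mem_nhds_iff.mpr ⟨Set.Ioo 0 1, Set.Ioo_subset_Ioc_self, isOpen_Ioo, ht⟩
  have hIccsub : ∀ x ∈ Set.Ioc (0:ℝ) 1, Set.Icc x 1 ⊆ Set.Ioc (0:ℝ) 1 :=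
    fun x hx t ht => ⟨lt_of_lt_of_le hx.1 ht.1, ht.2⟩
  have hftc3 : ∀ x ∈ Set.Ioc (0:ℝ) 1, ∫ s in x..1, y'''' s = y''' 1 - y''' x := by
    intro x hx
    exact intervalIntegral.integral_eq_sub_of_hasDerivAt_of_le hx.2
      (hcont3.mono (hIccsub x hx))
      (fun t ht => (hy4 t ⟨hx.1.trans ht.1, ht.2.le⟩).hasDerivAt
        (hnhds t ⟨hx.1.trans ht.1, ht.2⟩))
      ((intervalIntegrable_iff_integrableOn_Ioc_of_le hx.2).mpr (hint4 x hx))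
  have hconta : ContinuousOn a (Set.Ioc 0 1) :=
    fun t ht => ((hd t ht).continuousWithinAt).mono Set.Ioc_subset_Icc_self
  have hintInv : ∀ x ∈ Set.Ioc (0:ℝ) 1,
      MeasureTheory.IntegrableOn (fun s => 1 / a s) (Set.Ioc x 1) := by
    intro x hx
    have hc : ContinuousOn (fun s => 1 / a s) (Set.Icc x 1) :=
      continuousOn_const.div (hconta.mono (hIccsub x hx))
        (fun t ht => (hpos t (hIccsub x hx ht)).ne')
    exact hc.integrableOn_Icc.mono_set Set.Ioc_subset_Icc_self
  have hintRpow : ∀ x ∈ Set.Ioc (0:ℝ) 1,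
      MeasureTheory.IntegrableOn (fun s => s ^ (-K') / a 1) (Set.Ioc x 1) := by
    intro x hx
    have hc : ContinuousOn (fun s : ℝ => s ^ (-K') / a 1) (Set.Icc x 1) :=
      (continuousOn_id.rpow_const
        (fun t ht => Or.inl (lt_of_lt_of_le hx.1 ht.1).ne')).div_const (a 1)
    exact hc.integrableOn_Icc.mono_set Set.Ioc_subset_Icc_self
  set M : ℝ := ∫ s in Set.Ioc (0:ℝ) 1, a s * y'''' s ^ 2 with hM
  have hMx : ∀ x ∈ Set.Ioc (0:ℝ) 1, ∫ s in Set.Ioc x 1, a s * y'''' s ^ 2 ≤ M := by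
    intro x hx
    refine MeasureTheory.setIntegral_mono_set hDA ?_
      (MeasureTheory.ae_of_all _ (Set.Ioc_subset_Ioc_left hx.1.le))
    filter_upwards [MeasureTheory.ae_restrict_mem measurableSet_Ioc] with s hs
    exact mul_nonneg (hpos s hs).le (sq_nonneg _)
  have hIrpow : ∀ x ∈ Set.Ioc (0:ℝ) 1,
      ∫ s in Set.Ioc x 1, s ^ (-K') ≤ x ^ (1-K') / (K'-1) := by
    intro x hx
    have h0 : (0:ℝ) ∉ Set.uIcc x 1 := by
      rw [Set.uIcc_of_le hx.2]
      exact fun hh => absurd hh.1 (not_le.mpr hx.1)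
    have hval : ∫ s in x..(1:ℝ), s ^ (-K') = ((1:ℝ) ^ (-K'+1) - x ^ (-K'+1)) / (-K'+1) :=
      integral_rpow (Or.inr ⟨by linarith, h0⟩)
    rw [← intervalIntegral.integral_of_le hx.2, hval, Real.one_rpow]
    have hxp : x ^ (-K'+1) = x ^ (1-K') := by ring_nf
    rw [hxp]
    have hKm : (0:ℝ) < K' - 1 := by linarith
    rw [show -K'+1 = -(K'-1) by ring, div_neg, ← neg_div, neg_sub]
    exact (div_le_div_iff_of_pos_right hKm).mpr (by linarith)
  have hIinv : ∀ x ∈ Set.Ioc (0:ℝ) 1,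
      ∫ s in Set.Ioc x 1, 1 / a s ≤ x ^ (1-K') / ((K'-1) * a 1) := by
    intro x hx
    have h1 : ∫ s in Set.Ioc x 1, 1 / a s ≤ ∫ s in Set.Ioc x 1, s ^ (-K') / a 1 :=
      MeasureTheory.setIntegral_mono_on (hintInv x hx) (hintRpow x hx) measurableSet_Ioc
        (fun s hs => hinv s (Set.Ioc_subset_Ioc_left hx.1.le hs))
    have h2 : ∫ s in Set.Ioc x 1, s ^ (-K') / a 1
        = (∫ s in Set.Ioc x 1, s ^ (-K')) / a 1 := MeasureTheory.integral_div _ _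
    calc ∫ s in Set.Ioc x 1, 1 / a s ≤ (∫ s in Set.Ioc x 1, s ^ (-K')) / a 1 := by
          rw [← h2]; exact h1
      _ ≤ (x ^ (1-K') / (K'-1)) / a 1 := (div_le_div_iff_of_pos_right ha1).mpr (hIrpow x hx)
      _ = x ^ (1-K') / ((K'-1) * a 1) := by rw [div_div]
  have habs4int : ∀ x ∈ Set.Ioc (0:ℝ) 1,
      ∫ s in Set.Ioc x 1, |y'''' s| ≤ (M + x ^ (1-K') / ((K'-1) * a 1)) / 2 := by
    intro x hx
    have hsub : Set.Ioc x 1 ⊆ Set.Ioc (0:ℝ) 1 := Set.Ioc_subset_Ioc_left hx.1.le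
    have hi1 : MeasureTheory.IntegrableOn (fun s => |y'''' s|) (Set.Ioc x 1) := (hint4 x hx).abs
    have hi2 : MeasureTheory.IntegrableOn
        (fun s => (a s * y'''' s ^ 2 + 1 / a s) / 2) (Set.Ioc x 1) :=
      ((hDA.mono_set hsub).add (hintInv x hx)).div_const 2
    have h1 : ∫ s in Set.Ioc x 1, |y'''' s|
        ≤ ∫ s in Set.Ioc x 1, (a s * y'''' s ^ 2 + 1 / a s) / 2 :=
      MeasureTheory.setIntegral_mono_on hi1 hi2 measurableSet_Ioc
        (fun s hs => habs s (hsub hs))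
    rw [MeasureTheory.integral_div,
      MeasureTheory.integral_add (hDA.mono_set hsub) (hintInv x hx)] at h1
    have h2 := hMx x hx
    have h3 := hIinv x hx
    linarith
  have hb3 : ∀ x ∈ Set.Ioc (0:ℝ) 1,
      |y''' x| ≤ (|y''' 1| + M / 2) + (1 / (2 * (K'-1) * a 1)) * x ^ (1-K') := by
    intro x hx
    have h1 := hftc3 x hx
    have h2 : y''' x = y''' 1 - ∫ s in x..(1:ℝ), y'''' s := by linarith
    have h3 : |∫ s in x..(1:ℝ), y'''' s| ≤ ∫ s in Set.Ioc x 1, |y'''' s| := by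
      rw [intervalIntegral.integral_of_le hx.2]
      simpa using MeasureTheory.norm_integral_le_integral_norm (μ := MeasureTheory.volume.restrict (Set.Ioc x 1)) y''''
    have h4 := habs4int x hx
    have heq : (x ^ (1-K') / ((K'-1) * a 1)) / 2 = (1 / (2 * (K'-1) * a 1)) * x ^ (1-K') := by
      field_simp
    rw [h2]
    calc |y''' 1 - ∫ s in x..(1:ℝ), y'''' s| ≤ |y''' 1| + |∫ s in x..(1:ℝ), y'''' s| :=
          abs_sub _ _
      _ ≤ |y''' 1| + (M + x ^ (1-K') / ((K'-1) * a 1)) / 2 := by linarith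
      _ = (|y''' 1| + M / 2) + (1 / (2 * (K'-1) * a 1)) * x ^ (1-K') := by
          rw [← heq]; ring
  have hgint : MeasureTheory.IntegrableOn
      (fun x => (|y''' 1| + M / 2) + (1 / (2 * (K'-1) * a 1)) * x ^ (1-K')) (Set.Ioc 0 1) := by
    refine MeasureTheory.Integrable.add
      (MeasureTheory.integrableOn_const measure_Ioc_lt_top.ne) ?_
    refine MeasureTheory.Integrable.const_mul ?_ _
    exact (intervalIntegrable_iff_integrableOn_Ioc_of_le zero_le_one).mp
      (intervalIntegral.intervalIntegrable_rpow' (by linarith))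
  have hint3 : MeasureTheory.IntegrableOn y''' (Set.Ioc 0 1) := by
    refine MeasureTheory.Integrable.mono' hgint
      (hcont3.aestronglyMeasurable measurableSet_Ioc) ?_
    rw [MeasureTheory.ae_restrict_iff' measurableSet_Ioc]
    exact MeasureTheory.ae_of_all _ fun x hx => by
      rw [Real.norm_eq_abs]; exact hb3 x hx
  have hftc2 : ∀ x ∈ Set.Ioc (0:ℝ) 1, y'' x = y'' 1 - ∫ s in x..(1:ℝ), y''' s := by
    intro x hx
    have := intervalIntegral.integral_eq_sub_of_hasDerivAt_of_le hx.2
      (hcont2.mono (hIccsub x hx))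
      (fun t ht => (hy3 t ⟨hx.1.trans ht.1, ht.2.le⟩).hasDerivAt
        (hnhds t ⟨hx.1.trans ht.1, ht.2⟩))
      ((intervalIntegrable_iff_integrableOn_Ioc_of_le hx.2).mpr
        (hint3.mono_set (Set.Ioc_subset_Ioc_left hx.1.le)))
    linarith
  refine ⟨hint3, hftc2, ?_⟩
  set F : ℝ → ℝ := fun x => ∫ s in Set.Ioc (0:ℝ) x, y''' s with hF
  have hFcont : ContinuousOn F (Set.Icc 0 1) :=
    intervalIntegral.continuousOn_primitive ((integrableOn_Icc_iff_integrableOn_Ioc).mpr hint3)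
  have hF0 : F 0 = 0 := by simp [hF]
  have hFt : Filter.Tendsto F (nhdsWithin 0 (Set.Ioi 0)) (nhds 0) := by
    have h1 := (hFcont 0 (by norm_num : (0:ℝ) ∈ Set.Icc (0:ℝ) 1)).tendsto
    rw [hF0] at h1
    have h2 : nhdsWithin (0:ℝ) (Set.Ioi 0) ≤ nhdsWithin 0 (Set.Icc (0:ℝ) 1) := by
      rw [← nhdsWithin_Ioc_eq_nhdsGT (zero_lt_one)]
      exact nhdsWithin_mono 0 Set.Ioc_subset_Icc_self
    exact h1.mono_left h2
  refine ⟨y'' 1 - ∫ s in Set.Ioc (0:ℝ) 1, y''' s, ?_⟩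
  have heq2 : ∀ x ∈ Set.Ioc (0:ℝ) 1,
      y'' x = (y'' 1 - ∫ s in Set.Ioc (0:ℝ) 1, y''' s) + F x := by
    intro x hx
    have h1 := hftc2 x hx
    rw [intervalIntegral.integral_of_le hx.2] at h1
    have h2 : ∫ s in Set.Ioc (0:ℝ) 1, y''' s = F x + ∫ s in Set.Ioc x 1, y''' s := by
      rw [hF]
      rw [← MeasureTheory.setIntegral_union (Set.Ioc_disjoint_Ioc_of_le le_rfl) measurableSet_Ioc
        (hint3.mono_set (Set.Ioc_subset_Ioc_right hx.2))
        (hint3.mono_set (Set.Ioc_subset_Ioc_left hx.1.le)),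
        Set.Ioc_union_Ioc_eq_Ioc hx.1.le hx.2]
    rw [h1, h2]; ring
  have hT : Filter.Tendsto (fun x => (y'' 1 - ∫ s in Set.Ioc (0:ℝ) 1, y''' s) + F x)
      (nhdsWithin 0 (Set.Ioi 0)) (nhds ((y'' 1 - ∫ s in Set.Ioc (0:ℝ) 1, y''' s) + 0)) :=
    tendsto_const_nhds.add hFt
  rw [add_zero] at hT
  refine hT.congr' ?_
  have hmem : Set.Ioc (0:ℝ) 1 ∈ nhdsWithin (0:ℝ) (Set.Ioi 0) := by
    rw [← nhdsWithin_Ioc_eq_nhdsGT (zero_lt_one)]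
    exact self_mem_nhdsWithin
  filter_upwards [hmem] with x hx
  exact (heq2 x hx).symm
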